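/- For positive integers n, h_2(n) = 0 if and only if n is a power of 2 (including n = 1), and h_2(n) = 1 if and only if n = 3. -/

import Mathlib

/-!
If `F` has characteristic `p` and `n = p ^ d`, then `σ - 1` is nilpotent on `F^n`. For a proper
subspace `U ≤ ker f`, the vectors `(f (σ^i x))_i` form a nonzero `σ`-invariant subspace, which
therefore contains a nonzero `σ`-fixed, i.e. constant, vector; for the corresponding `x` no shift
lies in `ker f`, so `U` is not covering. Hence `h₂(2^d) = 0`.

If `U ≤ F_2^3` has codimension `2`, its three shifts cover at most `6 < 8` vectors, while
`{x₀ = x₁}` is covering, so `h₂(3) = 1`. Any other `n` has an odd divisor `m ≥ 5` or is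
divisible by `6`. Summing coordinates over residue classes mod `m` is a shift-equivariant
surjection `F^n → F^m`, so `h(m) ≤ h(n)`; and `{x₀ = x₃, x₁ = x₂}` covers `F_2^m` for odd `m`,
while `{x₀ = x₂, x₁ + x₂ + x₃ + x₄ = 0}` covers `F_2^6`.
-/

open Polynomial Module

/-- The cyclic shift operator on `Fin n → F`. -/
def cycShift (F : Type*) (n : ℕ) : (Fin n → F) → (Fin n → F) :=
  fun x i => x ⟨(i.1 + 1) % n, Nat.mod_lt _ (lt_of_le_of_lt (Nat.zero_le _) i.2)⟩

/-- A subspace `U ≤ F^n` is cyclically covering if the union of its cyclic shifts is `F^n`. -/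
def IsCycCovering (F : Type*) [Field F] (n : ℕ) (U : Submodule F (Fin n → F)) : Prop :=
  ∀ x : Fin n → F, ∃ r : ℕ, (cycShift F n)^[r] x ∈ U

/-- `hq F n` : the maximum codimension of a cyclically covering subspace of `F^n`. -/
noncomputable def hq (F : Type*) [Field F] [Fintype F] (n : ℕ) : ℕ :=
  sSup {k | ∃ U : Submodule F (Fin n → F), IsCycCovering F n U ∧
    Module.finrank F (Fin n → F) - Module.finrank F U = k}

open Fin.NatCast Fin.CommRing

variable {F : Type*}

section Shift

variable (F) {n : ℕ} [NeZero n]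

theorem cycShift_apply (x : Fin n → F) (i : Fin n) : cycShift F n x i = x (i + 1) := by
  simp only [cycShift]
  congr 1
  ext
  simp [Fin.val_add]

theorem cycShift_iterate_apply (x : Fin n → F) (r : ℕ) (i : Fin n) :
    (cycShift F n)^[r] x i = x (i + r) := by
  induction r generalizing i with
  | zero => simp
  | succ r ih =>
    rw [Function.iterate_succ_apply', cycShift_apply, ih]
    push_cast
    ring_nf

theorem cycShift_iterate_mod (x : Fin n → F) (r : ℕ) :
    (cycShift F n)^[r % n] x = (cycShift F n)^[r] x := by
  ext i
  simp only [cycShift_iterate_apply]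
  congr 2
  exact Fin.ext (by simp [Fin.val_natCast])

theorem cycShift_injective : Function.Injective (cycShift F n) := by
  intro x y h
  ext i
  simpa [cycShift_apply] using congrFun h (i - 1)

theorem apply_eq_apply_zero_of_cycShift_eq {w : Fin n → F} (hw : cycShift F n w = w) (i : Fin n) :
    w i = w 0 := by
  have := congrFun (Function.iterate_fixed hw i.val) 0
  rwa [cycShift_iterate_apply, zero_add, Fin.cast_val_eq_self] at this

end Shift

theorem IsNilpotent.exists_pow_apply_ne_zero_and_apply_eq_zero {R M : Type*} [Semiring R]
    [AddCommMonoid M] [Module R M] {T : Module.End R M} (hT : IsNilpotent T) {v : M}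
    (hv : v ≠ 0) : ∃ k, (T ^ k) v ≠ 0 ∧ T ((T ^ k) v) = 0 := by
  obtain ⟨N, hN⟩ := hT
  replace hN : (T ^ N) v = 0 := by simp [hN]
  induction N generalizing v with
  | zero => exact absurd hN hv
  | succ N ih =>
    by_cases hTv : T v = 0
    · exact ⟨0, hv, hTv⟩
    · rw [_root_.pow_succ, Module.End.mul_apply] at hN
      obtain ⟨k, hk⟩ := ih hTv hN
      exact ⟨k + 1, by rwa [_root_.pow_succ, Module.End.mul_apply]⟩

theorem LinearMap.surjective_of_apply_single {R : Type*} [Semiring R] {m k : ℕ}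
    (L : (Fin m → R) →ₗ[R] (Fin k → R)) (e : Fin k → Fin m)
    (h : ∀ j, L (Pi.single (e j) 1) = Pi.single j 1) : Function.Surjective L := by
  intro c
  refine ⟨∑ j, c j • Pi.single (e j) 1, funext fun i => ?_⟩
  simp [map_sum, h, Pi.single_apply]

variable [Field F]

section Linear

variable (F) (n : ℕ)

def cycShiftₗ : Module.End F (Fin n → F) where
  toFun := cycShift F n
  map_add' _ _ := rfl
  map_smul' _ _ := rfl

variable {F n}

theorem cycShiftₗ_pow_apply (r : ℕ) (x : Fin n → F) :
    (cycShiftₗ F n ^ r) x = (cycShift F n)^[r] x :=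
  Module.End.pow_apply _ r x

def orbitEval (f : Module.Dual F (Fin n → F)) : Module.End F (Fin n → F) :=
  LinearMap.pi fun i => f ∘ₗ cycShiftₗ F n ^ (i : ℕ)

theorem orbitEval_apply (f : Module.Dual F (Fin n → F)) (x : Fin n → F) (i : Fin n) :
    orbitEval f x i = f ((cycShift F n)^[i] x) := by
  simp [orbitEval, cycShiftₗ_pow_apply]

variable [NeZero n]

theorem cycShiftₗ_pow_self : cycShiftₗ F n ^ n = 1 := by
  refine LinearMap.ext fun x => ?_
  rw [cycShiftₗ_pow_apply, ← cycShift_iterate_mod, Nat.mod_self]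
  rfl

theorem commute_orbitEval_cycShiftₗ (f : Module.Dual F (Fin n → F)) :
    Commute (orbitEval f) (cycShiftₗ F n) := by
  refine LinearMap.ext fun x => funext fun i => ?_
  show orbitEval f (cycShift F n x) i = cycShift F n (orbitEval f x) i
  rw [cycShift_apply, orbitEval_apply, orbitEval_apply, ← Function.iterate_succ_apply,
    Fin.val_add, Fin.val_one', Nat.add_mod_mod, cycShift_iterate_mod]

end Linear

section CharPow

variable {p d : ℕ} [Fact p.Prime] [CharP F p]

variable (F) in
theorem isNilpotent_cycShiftₗ_sub_one : IsNilpotent (cycShiftₗ F (p ^ d) - 1) := by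
  have := charP_of_injective_algebraMap' F (A := Module.End F (Fin (p ^ d) → F)) p
  refine ⟨p ^ d, ?_⟩
  rw [sub_pow_char_pow_of_commute p d (Commute.one_right _), cycShiftₗ_pow_self, one_pow,
    sub_self]

theorem IsCycCovering.eq_top_of_charP {U : Submodule F (Fin (p ^ d) → F)}
    (hU : IsCycCovering F (p ^ d) U) : U = ⊤ := by
  by_contra hne
  obtain ⟨f, hf, hUf⟩ := U.exists_le_ker_of_lt_top (lt_top_iff_ne_top.2 hne)
  obtain ⟨x, hx⟩ := DFunLike.ne_iff.1 hf
  have hfx : orbitEval f x ≠ 0 := fun h => hx (by simpa [orbitEval_apply] using congrFun h 0)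
  set T := cycShiftₗ F (p ^ d) - 1
  obtain ⟨k, hk, hTk⟩ :=
    (isNilpotent_cycShiftₗ_sub_one F).exists_pow_apply_ne_zero_and_apply_eq_zero hfx
  set y := (T ^ k) x
  have hy : (T ^ k) (orbitEval f x) = orbitEval f y :=
    (congrArg (· x) ((commute_orbitEval_cycShiftₗ f).sub_right (Commute.one_right _)
      |>.pow_right k).eq).symm
  rw [hy] at hk hTk
  have hfix : cycShift F (p ^ d) (orbitEval f y) = orbitEval f y := sub_eq_zero.1 hTk
  obtain ⟨r, hr⟩ := hU y
  refine hk (funext fun i => ?_)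
  rw [apply_eq_apply_zero_of_cycShift_eq F hfix i, ← apply_eq_apply_zero_of_cycShift_eq F hfix r,
    orbitEval_apply, Fin.val_natCast, cycShift_iterate_mod]
  exact hUf hr

end CharPow

section Codimension

variable {n : ℕ}

theorem isCycCovering_top : IsCycCovering F n ⊤ := fun _ => ⟨0, trivial⟩

theorem IsCycCovering.comap {m : ℕ} {f : (Fin n → F) →ₗ[F] (Fin m → F)}
    (hf : Function.Semiconj f (cycShift F n) (cycShift F m)) {U : Submodule F (Fin m → F)}
    (hU : IsCycCovering F m U) : IsCycCovering F n (U.comap f) := fun x =>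
  let ⟨r, hr⟩ := hU (f x)
  ⟨r, by rwa [Submodule.mem_comap, hf.iterate_right r x]⟩

theorem finrank_sub_finrank_comap_of_surjective {V W : Type*} [AddCommGroup V] [Module F V]
    [FiniteDimensional F V] [AddCommGroup W] [Module F W] [FiniteDimensional F W]
    {f : V →ₗ[F] W} (hf : Function.Surjective f) (U : Submodule F W) :
    finrank F V - finrank F (U.comap f) = finrank F W - finrank F U := by
  have hker : U.comap f = LinearMap.ker (U.mkQ ∘ₗ f) := by rw [LinearMap.ker_comp, U.ker_mkQ]
  rw [← Submodule.finrank_quotient, ← Submodule.finrank_quotient, hker]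
  exact ((U.mkQ ∘ₗ f).quotKerEquivOfSurjective (U.mkQ_surjective.comp hf)).finrank_eq

theorem bddAbove_codim_isCycCovering : BddAbove {k | ∃ U : Submodule F (Fin n → F),
    IsCycCovering F n U ∧ finrank F (Fin n → F) - finrank F U = k} :=
  ⟨finrank F (Fin n → F), by rintro _ ⟨U, -, rfl⟩; exact Nat.sub_le _ _⟩

variable [Fintype F]

theorem IsCycCovering.codim_le_hq {U : Submodule F (Fin n → F)} (hU : IsCycCovering F n U) :
    finrank F (Fin n → F) - finrank F U ≤ hq F n :=
  le_csSup bddAbove_codim_isCycCovering ⟨U, hU, rfl⟩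

theorem hq_le {k : ℕ} (h : ∀ U : Submodule F (Fin n → F), IsCycCovering F n U →
    finrank F (Fin n → F) - finrank F U ≤ k) : hq F n ≤ k :=
  csSup_le ⟨_, ⊤, isCycCovering_top, rfl⟩ (by rintro _ ⟨U, hU, rfl⟩; exact h U hU)

variable (F n) in
theorem exists_isCycCovering_codim_eq_hq :
    ∃ U : Submodule F (Fin n → F), IsCycCovering F n U ∧
      finrank F (Fin n → F) - finrank F U = hq F n := by
  refine Nat.sSup_mem ?_ bddAbove_codim_isCycCovering
  exact ⟨_, ⊤, isCycCovering_top, rfl⟩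

theorem finrank_le_hq_of_surjective {W : Type*} [AddCommGroup W] [Module F W]
    [FiniteDimensional F W] {L : (Fin n → F) →ₗ[F] W} (hL : Function.Surjective L)
    (hcov : IsCycCovering F n (LinearMap.ker L)) : finrank F W ≤ hq F n := by
  have h := finrank_sub_finrank_comap_of_surjective hL ⊥
  rw [Submodule.comap_bot, finrank_bot, Nat.sub_zero] at h
  exact h ▸ hcov.codim_le_hq

theorem IsCycCovering.card_pow_codim_le [NeZero n] {U : Submodule F (Fin n → F)}
    (hU : IsCycCovering F n U) :
    Fintype.card F ^ (finrank F (Fin n → F) - finrank F U) ≤ n := by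
  classical
  choose r hr using hU
  let g : (Fin n → F) → Fin n × U := fun x =>
    ((r x : Fin n), ⟨(cycShift F n)^[(r x : Fin n)] x, by
      rw [Fin.val_natCast, cycShift_iterate_mod]; exact hr x⟩)
  have hg : Function.Injective g := by
    intro x y hxy
    simp only [g, Prod.mk.injEq, Subtype.mk.injEq] at hxy
    obtain ⟨h1, h2⟩ := hxy
    rw [h1] at h2
    exact (cycShift_injective F).iterate _ h2
  have hcard := Fintype.card_le_of_injective g hg
  rw [Fintype.card_prod, Fintype.card_fin, card_eq_pow_finrank (K := F) (V := U),
    card_eq_pow_finrank (K := F) (V := Fin n → F), ← Nat.sub_add_cancel U.finrank_le,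
    pow_add] at hcard
  exact Nat.le_of_mul_le_mul_right (by simpa [mul_comm] using hcard) (by positivity)

theorem hq_charP_pow_eq_zero (p d : ℕ) [Fact p.Prime] [CharP F p] : hq F (p ^ d) = 0 :=
  Nat.eq_zero_of_le_zero <| hq_le fun U hU => by
    rw [hU.eq_top_of_charP, finrank_top, Nat.sub_self]

end Codimension

theorem Fin.natCast_val_add_one_of_dvd {m n : ℕ} [NeZero m] [NeZero n] (hmn : m ∣ n)
    (j : Fin n) : (((j + 1 : Fin n) : ℕ) : Fin m) = ((j : ℕ) : Fin m) + 1 := by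
  ext
  simp [Fin.val_add, Fin.val_natCast, Nat.mod_mod_of_dvd _ hmn]

section Fold

variable (F) (m n : ℕ) [NeZero m]

def cycFold : (Fin n → F) →ₗ[F] (Fin m → F) :=
  LinearMap.pi fun i => ∑ j ∈ Finset.univ.filter (fun j : Fin n => ((j : ℕ) : Fin m) = i),
    LinearMap.proj j

variable {F m n}

theorem cycFold_apply (x : Fin n → F) (i : Fin m) :
    cycFold F m n x i =
      ∑ j ∈ Finset.univ.filter (fun j : Fin n => ((j : ℕ) : Fin m) = i), x j := by
  simp [cycFold]

variable [NeZero n] (hmn : m ∣ n)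
include hmn

theorem semiconj_cycFold : Function.Semiconj (cycFold F m n) (cycShift F n) (cycShift F m) := by
  intro x
  funext i
  rw [cycShift_apply, cycFold_apply, cycFold_apply, Finset.sum_filter, Finset.sum_filter]
  refine Fintype.sum_equiv (Equiv.addRight 1) _ _ fun j => ?_
  simp [cycShift_apply, Fin.natCast_val_add_one_of_dvd hmn]

theorem cycFold_surjective : Function.Surjective (cycFold F m n) := by
  have hle : m ≤ n := Nat.le_of_dvd (NeZero.pos n) hmn
  intro y
  refine ⟨fun j => if (j : ℕ) < m then y (j : ℕ) else 0, funext fun i => ?_⟩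
  rw [cycFold_apply, Finset.sum_eq_single ⟨i, i.2.trans_le hle⟩]
  · simp
  · intro j hj hne
    rw [if_neg]
    intro hjm
    refine hne (Fin.ext ?_)
    rw [Finset.mem_filter, Fin.ext_iff, Fin.val_natCast, Nat.mod_eq_of_lt hjm] at hj
    exact hj.2
  · simp

end Fold

theorem hq_le_hq_of_dvd [Fintype F] {m n : ℕ} [NeZero n] (hmn : m ∣ n) : hq F m ≤ hq F n := by
  have : NeZero m := ⟨(Nat.pos_of_dvd_of_pos hmn (NeZero.pos n)).ne'⟩
  obtain ⟨U, hU, hcodim⟩ := exists_isCycCovering_codim_eq_hq F m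
  rw [← hcodim, ← finrank_sub_finrank_comap_of_surjective (cycFold_surjective hmn) U]
  exact (hU.comap (semiconj_cycFold hmn)).codim_le_hq

/-- A colouring of the windows `(a, b, c)` that flips at every step `(a, b, c) → (b, c, d)` except
when `(a, b, c, d) = (a, b, b, a)`; so a periodic sequence without such windows has even period. -/
def windowColour (a b c : ZMod 2) : ZMod 2 := a * c + (b + 1) * (a + c)

theorem windowColour_succ (a b c d : ZMod 2) (h : ¬(a = d ∧ b = c)) :
    windowColour b c d = windowColour a b c + 1 := by
  revert a b c d
  decide

theorem ZMod.apply_odd_ne_apply_zero_of_alternating {m : ℕ} (hm : Odd m) {s : ℕ → ZMod 2}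
    (hs : ∀ r, s (r + 1) = s r + 1) : s m ≠ s 0 := by
  have hlin : ∀ r, s r = s 0 + r := fun r => by
    induction r with
    | zero => simp
    | succ r ih => rw [hs, ih]; push_cast; ring
  rw [hlin m, hm.natCast_zmod_two]
  simp

def oddWindowMap (m : ℕ) [NeZero m] : (Fin m → ZMod 2) →ₗ[ZMod 2] (Fin 2 → ZMod 2) where
  toFun x := ![x 0 - x 3, x 1 - x 2]
  map_add' x y := by ext i; fin_cases i <;> simp <;> ring
  map_smul' c x := by ext i; fin_cases i <;> simp <;> ring

theorem isCycCovering_ker_oddWindowMap {m : ℕ} [NeZero m] (hm : Odd m) :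
    IsCycCovering (ZMod 2) m (LinearMap.ker (oddWindowMap m)) := by
  intro x
  by_contra! hx
  set Y : ℕ → ZMod 2 := fun t => x t
  have hY : ∀ r, ¬(Y r = Y (r + 3) ∧ Y (r + 1) = Y (r + 2)) := by
    intro r h
    apply hx r
    simp only [LinearMap.mem_ker, oddWindowMap, LinearMap.coe_mk, AddHom.coe_mk,
      cycShift_iterate_apply]
    simp only [Y, Nat.cast_add, Nat.cast_ofNat, Nat.cast_one] at h
    simp [add_comm, h.1, h.2]
  refine ZMod.apply_odd_ne_apply_zero_of_alternating hm
    (s := fun r => windowColour (Y r) (Y (r + 1)) (Y (r + 2)))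
    (fun r => windowColour_succ _ _ _ _ (hY r)) ?_
  simp [Y]

theorem oddWindowMap_surjective {m : ℕ} [NeZero m] (hm : 4 ≤ m) :
    Function.Surjective (oddWindowMap m) := by
  refine LinearMap.surjective_of_apply_single _ ![0, 1] fun j => ?_
  fin_cases j <;> ext i <;> fin_cases i <;>
    simp [oddWindowMap, Fin.ext_iff, Nat.mod_eq_of_lt, show 3 < m by omega,
      show 2 < m by omega, show 1 < m by omega]

theorem two_le_hq_zmod_two_of_odd {m : ℕ} (hm : Odd m) (h5 : 5 ≤ m) : 2 ≤ hq (ZMod 2) m := by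
  have : NeZero m := ⟨hm.pos.ne'⟩
  simpa using finrank_le_hq_of_surjective (oddWindowMap_surjective (by omega))
    (isCycCovering_ker_oddWindowMap hm)

def sixWindowMap : (Fin 6 → ZMod 2) →ₗ[ZMod 2] (Fin 2 → ZMod 2) where
  toFun x := ![x 0 - x 2, x 1 + x 2 + x 3 + x 4]
  map_add' x y := by ext i; fin_cases i <;> simp <;> ring
  map_smul' c x := by ext i; fin_cases i <;> simp <;> ring

theorem two_le_hq_zmod_two_six : 2 ≤ hq (ZMod 2) 6 := by
  have hcov : ∀ x : Fin 6 → ZMod 2, ∃ r : Fin 6, x r - x (2 + r) = 0 ∧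
      x (1 + r) + x (2 + r) + x (3 + r) + x (4 + r) = 0 := by decide
  have hsurj : Function.Surjective sixWindowMap :=
    LinearMap.surjective_of_apply_single _ ![0, 1] (by decide)
  refine (finrank_le_hq_of_surjective hsurj fun x => ?_).trans_eq' (by simp)
  obtain ⟨r, hr⟩ := hcov x
  exact ⟨r, by simpa [sixWindowMap, cycShift_iterate_apply] using hr⟩

def threeWindowMap : (Fin 3 → ZMod 2) →ₗ[ZMod 2] (Fin 1 → ZMod 2) where
  toFun x := ![x 0 - x 1]
  map_add' x y := by ext i; fin_cases i; simp; ring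
  map_smul' c x := by ext i; fin_cases i; simp; ring

theorem hq_zmod_two_three : hq (ZMod 2) 3 = 1 := by
  refine le_antisymm (hq_le fun U hU => ?_) ?_
  · have h := hU.card_pow_codim_le
    rw [ZMod.card] at h
    by_contra! h2
    have := Nat.pow_le_pow_right two_pos h2
    omega
  · have hcov : ∀ x : Fin 3 → ZMod 2, ∃ r : Fin 3, x r - x (1 + r) = 0 := by decide
    have hsurj : Function.Surjective threeWindowMap :=
      LinearMap.surjective_of_apply_single _ ![0] (by decide)
    refine (finrank_le_hq_of_surjective hsurj fun x => ?_).trans_eq' (by simp)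
    obtain ⟨r, hr⟩ := hcov x
    exact ⟨r, by simpa [threeWindowMap, cycShift_iterate_apply] using hr⟩

theorem two_le_hq_zmod_two_of_ne_three {n : ℕ} (hn : n ≠ 0) (hpow : ¬∃ d : ℕ, n = 2 ^ d)
    (h3 : n ≠ 3) : 2 ≤ hq (ZMod 2) n := by
  have : NeZero n := ⟨hn⟩
  obtain ⟨k, m, hm, rfl⟩ := Nat.exists_eq_two_pow_mul_odd hn
  obtain rfl | rfl | h5 : m = 1 ∨ m = 3 ∨ 5 ≤ m := by obtain ⟨j, rfl⟩ := hm; omega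
  · exact absurd ⟨k, mul_one _⟩ hpow
  · obtain _ | k := k
    · simp at h3
    · exact two_le_hq_zmod_two_six.trans (hq_le_hq_of_dvd ⟨2 ^ k, by ring⟩)
  · exact (two_le_hq_zmod_two_of_odd hm h5).trans (hq_le_hq_of_dvd (dvd_mul_left m _))

/-- h₂(n) = 0 iff n is a power of 2, and h₂(n) = 1 iff n = 3. -/
theorem stmt_19 (n : ℕ) (hn : 0 < n) :
    (hq (ZMod 2) n = 0 ↔ ∃ d : ℕ, n = 2 ^ d) ∧ (hq (ZMod 2) n = 1 ↔ n = 3) := by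
  by_cases hpow : ∃ d : ℕ, n = 2 ^ d
  · obtain ⟨d, rfl⟩ := hpow
    have h3 : 2 ^ d ≠ 3 := by
      rcases d with _ | d
      · simp
      · rw [pow_succ]; omega
    simp [hq_charP_pow_eq_zero (F := ZMod 2) 2 d, h3]
  · by_cases h3 : n = 3
    · subst h3
      simp [hq_zmod_two_three, hpow]
    · have := two_le_hq_zmod_two_of_ne_three hn.ne' hpow h3
      simp only [hpow, h3, iff_false]
      omega
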